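/- A code C ⊆ {0,1}^α × (Z/4Z)^β is closed under coordinatewise addition (mod 2 on the first α coordinates, mod 4 on the last β coordinates) if and only if its Gray image Φ(C) ⊆ {0,1}^{α+2β} is closed under the operation *_π, where π is the involution swapping coordinates α+2k and α+2k+1 for each k = 0,...,β-1 and fixing the first α coordinates. -/

import Mathlib

/-!
The Gray map `Φ` is injective and turns addition into `*_π`: `Φ(x + y) = Φ(x) *_π Φ(y)`.
On a binary coordinate `π` is the identity, so the correction term `(x + π x)(y + π y)`
vanishes; on the pair of coordinates carrying a quaternary entry, `*_π` is the formula
that recovers `φ(q + r)` from `φ(q)` and `φ(r)` (a check of the 16 cases). Hence `C` is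
closed under `+` exactly when `Φ(C)` is closed under `*_π`.
-/

/-- The `Z₂Z₄` operation `x *_π y = x + y + (x + π(x))·(y + π(y))` on `(Z/2Z)^n`. -/
def star {n : ℕ} (π : Fin n → Fin n) (x y : Fin n → ZMod 2) : Fin n → ZMod 2 :=
  x + y + (x + x ∘ π) * (y + y ∘ π)

/-- `φ : Z/4Z → (Z/2Z)²` with `φ(0)=(0,0)`, `φ(1)=(0,1)`, `φ(2)=(1,1)`, `φ(3)=(1,0)`. -/
def phi (q : ZMod 4) : ZMod 2 × ZMod 2 :=
  (if 2 ≤ q.val then 1 else 0, if q.val = 1 ∨ q.val = 2 then 1 else 0)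

/-- The Gray map `Φ : {0,1}^α × (Z/4Z)^β → {0,1}^{α+2β}`. -/
def gray {α β : ℕ} (x : (Fin α → ZMod 2) × (Fin β → ZMod 4)) :
    Fin (α + 2 * β) → ZMod 2 :=
  fun i =>
    if h : (i : ℕ) < α then x.1 ⟨i, h⟩
    else if ((i : ℕ) - α) % 2 = 0 then
      (phi (x.2 ⟨((i : ℕ) - α) / 2, by have := i.isLt; omega⟩)).1
    else
      (phi (x.2 ⟨((i : ℕ) - α) / 2, by have := i.isLt; omega⟩)).2

/-- The involution of `{0,...,α+2β-1}` fixing the first `α` coordinates and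
swapping coordinates `α+2k` and `α+2k+1` for each `k < β`. -/
def pairSwap {α β : ℕ} : Fin (α + 2 * β) → Fin (α + 2 * β) :=
  fun i =>
    if h : (i : ℕ) < α then i
    else if h2 : ((i : ℕ) - α) % 2 = 0 then ⟨(i : ℕ) + 1, by have := i.isLt; omega⟩
    else ⟨(i : ℕ) - 1, by have := i.isLt; omega⟩

theorem Function.Injective.closed_iff_image_closed {A B : Type*} {f : A → B}
    (hf : Function.Injective f) {opA : A → A → A} {opB : B → B → B}
    (hop : ∀ x y, f (opA x y) = opB (f x) (f y)) (C : Set A) :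
    (∀ x ∈ C, ∀ y ∈ C, opA x y ∈ C) ↔ ∀ a ∈ f '' C, ∀ b ∈ f '' C, opB a b ∈ f '' C := by
  simp only [Set.forall_mem_image, ← hop, hf.mem_set_image]

theorem star_apply {n : ℕ} (π : Fin n → Fin n) (x y : Fin n → ZMod 2) (i : Fin n) :
    star π x y i = x i + y i + (x i + x (π i)) * (y i + y (π i)) :=
  rfl

theorem phi_injective : Function.Injective phi := by
  decide

theorem phi_add_fst (q r : ZMod 4) :
    (phi (q + r)).1
      = (phi q).1 + (phi r).1 + ((phi q).1 + (phi q).2) * ((phi r).1 + (phi r).2) := by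
  revert q r; decide

theorem phi_add_snd (q r : ZMod 4) :
    (phi (q + r)).2
      = (phi q).2 + (phi r).2 + ((phi q).2 + (phi q).1) * ((phi r).2 + (phi r).1) := by
  revert q r; decide

section GrayCoordinates

variable {α β : ℕ}

def fstIdx (k : Fin β) : Fin (α + 2 * β) := ⟨α + 2 * k, by omega⟩

def sndIdx (k : Fin β) : Fin (α + 2 * β) := ⟨α + 2 * k + 1, by omega⟩

@[simp]
theorem val_fstIdx (k : Fin β) : (fstIdx (α := α) k : ℕ) = α + 2 * k := rfl

@[simp]
theorem val_sndIdx (k : Fin β) : (sndIdx (α := α) k : ℕ) = α + 2 * k + 1 := rfl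

theorem exists_castAdd_or_fstIdx_or_sndIdx (i : Fin (α + 2 * β)) :
    (∃ j : Fin α, i = Fin.castAdd (2 * β) j) ∨ ∃ k : Fin β, i = fstIdx k ∨ i = sndIdx k := by
  by_cases h : (i : ℕ) < α
  · exact Or.inl ⟨⟨i, h⟩, rfl⟩
  · refine Or.inr ⟨⟨((i : ℕ) - α) / 2, by omega⟩, ?_⟩
    rcases Nat.mod_two_eq_zero_or_one ((i : ℕ) - α) with he | ho
    · exact Or.inl (Fin.ext (by simp only [val_fstIdx]; omega))
    · exact Or.inr (Fin.ext (by simp only [val_sndIdx]; omega))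

variable (x : (Fin α → ZMod 2) × (Fin β → ZMod 4))

@[simp]
theorem gray_castAdd (j : Fin α) : gray x (Fin.castAdd (2 * β) j) = x.1 j := by
  simp [gray]

@[simp]
theorem gray_fstIdx (k : Fin β) : gray x (fstIdx k) = (phi (x.2 k)).1 := by
  simp [gray, fstIdx]

@[simp]
theorem gray_sndIdx (k : Fin β) : gray x (sndIdx k) = (phi (x.2 k)).2 := by
  have hα : ¬ (sndIdx (α := α) k : ℕ) < α := by simp only [val_sndIdx]; omega
  have hodd : ((sndIdx (α := α) k : ℕ) - α) % 2 ≠ 0 := by simp only [val_sndIdx]; omega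
  rw [gray, dif_neg hα, if_neg hodd]
  exact congrArg (fun k' => (phi (x.2 k')).2) (Fin.ext (by simp only [val_sndIdx]; omega))

@[simp]
theorem pairSwap_castAdd (j : Fin α) :
    pairSwap (Fin.castAdd (2 * β) j) = Fin.castAdd (2 * β) j := by
  simp [pairSwap]

@[simp]
theorem pairSwap_fstIdx (k : Fin β) : pairSwap (fstIdx (α := α) k) = sndIdx k := by
  simp [pairSwap, fstIdx, sndIdx]

@[simp]
theorem pairSwap_sndIdx (k : Fin β) : pairSwap (sndIdx (α := α) k) = fstIdx k := by
  have hα : ¬ (sndIdx (α := α) k : ℕ) < α := by simp only [val_sndIdx]; omega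
  have hodd : ((sndIdx (α := α) k : ℕ) - α) % 2 ≠ 0 := by simp only [val_sndIdx]; omega
  rw [pairSwap, dif_neg hα, dif_neg hodd]
  ext
  simp only [val_sndIdx, val_fstIdx]
  omega

end GrayCoordinates

theorem gray_add {α β : ℕ} (x y : (Fin α → ZMod 2) × (Fin β → ZMod 4)) :
    gray (x + y) = star pairSwap (gray x) (gray y) := by
  funext i
  rcases exists_castAdd_or_fstIdx_or_sndIdx i with ⟨j, rfl⟩ | ⟨k, rfl | rfl⟩
  · simp [star_apply, CharTwo.add_self_eq_zero]
  · simp only [star_apply, gray_fstIdx, gray_sndIdx, pairSwap_fstIdx, Prod.snd_add,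
      Pi.add_apply, phi_add_fst]
  · simp only [star_apply, gray_fstIdx, gray_sndIdx, pairSwap_sndIdx, Prod.snd_add,
      Pi.add_apply, phi_add_snd]

theorem gray_injective {α β : ℕ} : Function.Injective (gray (α := α) (β := β)) := by
  intro x y h
  refine Prod.ext (funext fun j => ?_) (funext fun k => phi_injective (Prod.ext ?_ ?_))
  · simpa using congrFun h (Fin.castAdd (2 * β) j)
  · simpa using congrFun h (fstIdx k)
  · simpa using congrFun h (sndIdx k)

/-- a code `C ⊆ {0,1}^α × (Z/4Z)^β` is additive (closed under
coordinatewise addition, mod 2 on the binary part and mod 4 on the quaternary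
part) iff its Gray image is closed under `*_π` with `π` the pair-swapping
involution. -/
theorem additive_iff_grayImage_closed {α β : ℕ}
    (C : Set ((Fin α → ZMod 2) × (Fin β → ZMod 4))) :
    (∀ x ∈ C, ∀ y ∈ C, x + y ∈ C) ↔
      (∀ a ∈ gray '' C, ∀ b ∈ gray '' C, star (pairSwap (α := α) (β := β)) a b ∈ gray '' C) :=
  gray_injective.closed_iff_image_closed gray_add C
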